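/- Let x and y be left I-states of size k that are not too far, with generating intervals G_1, …, G_{n−k} ⊆ {1,…,n} of sizes l_1, …, l_{n−k}. For each m ≥ 0 let N_m be the number of tuples a = (a_1,…,a_n) of nonnegative integers with a_1 + ⋯ + a_n = m such that for every 1 ≤ i ≤ n−k there exists j ∈ G_i with a_j = 0 (i.e. the monomial U_1^{a_1}⋯U_n^{a_n} is not divisible by p_{G_i} = Π_{j ∈ G_i} U_j). Then in the formal power series ring ℤ[[t]]: Σ_{m≥0} N_m t^m = Π_{i=1}^{n−k} (1 + t + ⋯ + t^{l_i−1}) · (1−t)^{−k}. (Equivalently, the graded dimension of the summand I_x·B_l(n,k)·I_y of Ozsváth–Szabó's algebra is q^d Π_i (l_i)_{q²} / (1−q²)^k with t = q².) -/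

import Mathlib

/-- The `i`-th smallest element (0-indexed) of a finite set of natural numbers. -/
def nthElt (s : Finset ℕ) (i : ℕ) : ℕ := (s.sort (· ≤ ·)).getD i 0

/-- The hole set of an I-state: the complement `{0, …, n} \ s`. -/
def holes (n : ℕ) (s : Finset ℕ) : Finset ℕ := Finset.range (n + 1) \ s

/-- The `i`-th hole (0-indexed): `hnth n s i` is `h_{i+1}^s` in 1-indexed notation. -/
def hnth (n : ℕ) (s : Finset ℕ) (i : ℕ) : ℕ := nthElt (holes n s) i

/-- Two I-states of size `k` are too far if `|x_i − y_i| > 1` for some `i`. -/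
def TooFar (k : ℕ) (x y : Finset ℕ) : Prop :=
  ∃ i < k, 1 < ((nthElt x i : ℤ) - (nthElt y i : ℤ)).natAbs

/-- `N_m`: the number of exponent tuples `a = (a_1, …, a_n)` with `Σ a_j = m` such that for
each generating interval `G_i` (whose 0-indexed variable positions run from
`max(h_i^x, h_i^y)` to `min(h_{i+1}^x, h_{i+1}^y) − 1`) some `a_j` with `j ∈ G_i` vanishes,
i.e. the monomial `U^a` is not divisible by `p_{G_i}`. -/
def Ncount (n k : ℕ) (x y : Finset ℕ) (m : ℕ) : ℕ :=
  ((Finset.Nat.antidiagonalTuple n m).filter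
    (fun a : Fin n → ℕ => ∀ i < n - k, ∃ t : Fin n,
      max (hnth n x i) (hnth n y i) ≤ (t : ℕ) ∧
      (t : ℕ) < min (hnth n x (i + 1)) (hnth n y (i + 1)) ∧ a t = 0)).card

/-
Call a tuple `a : Fin n → ℕ` positive on `T` if `a t ≠ 0` for all `t ∈ T`. Adding `1` on `T` is a
bijection from the tuples of total `m - #T` onto the tuples of total `m` positive on `T`, and it
does not affect any condition that only looks at coordinates outside `T`. Since the generating
intervals are pairwise disjoint (the holes of `x` increase), each requirement "some `a_j` with
`j ∈ G_i` vanishes" therefore multiplies the generating function by `1 - t ^ l_i`, starting from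
`(1 - t)⁻ⁿ` for all tuples. Finally `1 - t ^ l = (1 + ⋯ + t ^ (l - 1)) (1 - t)` and
`n = (n - k) + k`.
-/

open PowerSeries
open Finset hiding mk

section TupleGF

variable (R : Type*) [CommRing R] (n : ℕ)

noncomputable def tupleGF (p : (Fin n → ℕ) → Prop) [DecidablePred p] : R⟦X⟧ :=
  mk fun m => (#{a ∈ Nat.antidiagonalTuple n m | p a} : R)

variable {R n}

theorem tupleGF_congr {p q : (Fin n → ℕ) → Prop} [DecidablePred p] [DecidablePred q]
    (h : ∀ a, p a ↔ q a) : tupleGF R n p = tupleGF R n q := by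
  simp only [tupleGF, filter_congr fun a _ => h a]

theorem tupleGF_true : tupleGF R n (fun _ => True) = mk 1 ^ n := by
  ext m
  have hcard :
      #(univ.finsuppAntidiag m : Finset (Fin n →₀ ℕ)) = #(Nat.antidiagonalTuple n m) := by
    rw [← piAntidiag_univ_fin_eq_antidiagonalTuple, finsuppAntidiag, card_map, card_attach]
  rw [← Fin.prod_const n (mk 1 : R⟦X⟧), coeff_prod]
  simp [tupleGF, hcard]

theorem tupleGF_and_add_tupleGF_not_and (p q : (Fin n → ℕ) → Prop) [DecidablePred p]
    [DecidablePred q] :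
    tupleGF R n (fun a => p a ∧ q a) + tupleGF R n (fun a => ¬ p a ∧ q a) = tupleGF R n q := by
  ext m
  simp only [tupleGF, map_add, coeff_mk, ← Nat.cast_add]
  rw [← card_filter_add_card_filter_not (s := {a ∈ Nat.antidiagonalTuple n m | q a}) p,
    filter_filter, filter_filter]
  simp only [and_comm]

theorem tupleGF_forall_ne_zero_and {T : Finset (Fin n)} {q : (Fin n → ℕ) → Prop}
    [DecidablePred q] (hq : ∀ a b : Fin n → ℕ, (∀ t ∉ T, a t = b t) → (q a ↔ q b)) :
    tupleGF R n (fun a => (∀ t ∈ T, a t ≠ 0) ∧ q a) = X ^ #T * tupleGF R n q := by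
  ext m
  rw [coeff_X_pow_mul', tupleGF, tupleGF, coeff_mk, coeff_mk]
  set e : Fin n → ℕ := fun t => if t ∈ T then 1 else 0
  have sum_e : ∑ t, e t = #T := by simp [e]
  have e_eq_zero {t : Fin n} (ht : t ∉ T) : e t = 0 := if_neg ht
  split_ifs with hm
  · congr 1
    refine card_bij' (fun a _ => a - e) (fun b _ => b + e) (fun a ha => ?_) (fun b hb => ?_)
      (fun a ha => ?_) (fun b _ => add_tsub_cancel_right b e)
    · simp only [mem_filter, Nat.mem_antidiagonalTuple] at ha ⊢
      have hle : e ≤ a := fun t => by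
        by_cases ht : t ∈ T <;> simp [e, ht, ha.2.1 t, Nat.one_le_iff_ne_zero]
      refine ⟨?_, (hq _ _ fun t ht => by simp [e_eq_zero ht]).2 ha.2.2⟩
      have : ∑ t, (a - e) t + #T = m := by
        rw [← sum_e, ← sum_add_distrib, ← ha.1]
        exact sum_congr rfl fun t _ => tsub_add_cancel_of_le (hle t)
      omega
    · simp only [mem_filter, Nat.mem_antidiagonalTuple] at hb ⊢
      refine ⟨?_, fun t ht => by simp [e, ht], (hq _ _ fun t ht => by simp [e_eq_zero ht]).2 hb.2⟩
      rw [Pi.add_def, sum_add_distrib, hb.1, sum_e, tsub_add_cancel_of_le hm]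
    · simp only [mem_filter] at ha
      ext t
      by_cases ht : t ∈ T <;> simp [e, ht, Nat.sub_add_cancel, Nat.one_le_iff_ne_zero, ha.2.1 t]
  · rw [filter_eq_empty_iff.2 fun a ha h => ?_, card_empty, Nat.cast_zero]
    obtain ⟨hpos, -⟩ := h
    rw [Nat.mem_antidiagonalTuple] at ha
    have : #T ≤ ∑ t, a t :=
      calc #T = ∑ t ∈ T, 1 := (card_eq_sum_ones T)
        _ ≤ ∑ t ∈ T, a t := sum_le_sum fun t ht => Nat.one_le_iff_ne_zero.2 (hpos t ht)
        _ ≤ ∑ t, a t := sum_le_sum_of_subset (subset_univ T)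
    omega

theorem tupleGF_forall_exists_eq_zero {ι : Type*} [DecidableEq ι] (G : ι → Finset (Fin n))
    (s : Finset ι) (hG : (s : Set ι).PairwiseDisjoint G) :
    tupleGF R n (fun a => ∀ i ∈ s, ∃ t ∈ G i, a t = 0) =
      (∏ i ∈ s, (1 - X ^ #(G i))) * mk 1 ^ n := by
  induction s using Finset.induction_on with
  | empty =>
    rw [prod_empty, one_mul, ← tupleGF_true]
    exact tupleGF_congr fun a => by simp
  | insert j s hj ih =>
    rw [coe_insert, Set.pairwiseDisjoint_insert] at hG
    have hq (a b : Fin n → ℕ) (hab : ∀ t ∉ G j, a t = b t) :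
        (∀ i ∈ s, ∃ t ∈ G i, a t = 0) ↔ (∀ i ∈ s, ∃ t ∈ G i, b t = 0) := by
      have hab' {i} (hi : i ∈ s) {t} (ht : t ∈ G i) : a t = b t :=
        hab t (disjoint_right.1 (hG.2 i hi (ne_of_mem_of_not_mem hi hj).symm) ht)
      exact forall₂_congr fun i hi =>
        exists_congr fun t => and_congr_right fun ht => by rw [hab' hi ht]
    calc tupleGF R n (fun a => ∀ i ∈ insert j s, ∃ t ∈ G i, a t = 0)
        = tupleGF R n (fun a => ¬(∀ t ∈ G j, a t ≠ 0) ∧ ∀ i ∈ s, ∃ t ∈ G i, a t = 0) :=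
          tupleGF_congr fun a => by simp only [forall_mem_insert, not_forall, not_not, exists_prop]
      _ = tupleGF R n (fun a => ∀ i ∈ s, ∃ t ∈ G i, a t = 0) -
            tupleGF R n (fun a => (∀ t ∈ G j, a t ≠ 0) ∧ ∀ i ∈ s, ∃ t ∈ G i, a t = 0) :=
          eq_sub_of_add_eq' (tupleGF_and_add_tupleGF_not_and _ _)
      _ = (∏ i ∈ insert j s, (1 - X ^ #(G i))) * mk 1 ^ n := by
          rw [tupleGF_forall_ne_zero_and hq, ih hG.1, prod_insert hj]
          ring

end TupleGF

theorem PowerSeries.inverse_one_sub_X {R : Type*} [CommRing R] :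
    Ring.inverse (1 - X : R⟦X⟧) = mk 1 := by
  have h : (1 - X : R⟦X⟧) * mk 1 = 1 := by rw [mul_comm, mk_one_mul_one_sub_eq_one]
  calc Ring.inverse (1 - X : R⟦X⟧) = Ring.inverse (1 - X) * ((1 - X) * mk 1) := by rw [h, mul_one]
    _ = mk 1 := Ring.inverse_mul_cancel_left _ _ (.of_mul_eq_one _ h)

section IState

variable {s : Finset ℕ} {n i j : ℕ}

theorem nthElt_eq_orderEmbOfFin (hi : i < #s) : nthElt s i = s.orderEmbOfFin rfl ⟨i, hi⟩ := by
  rw [orderEmbOfFin_apply, nthElt, List.getD_eq_getElem?_getD, List.getElem?_eq_getElem]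
  rfl

theorem nthElt_mem (hi : i < #s) : nthElt s i ∈ s :=
  nthElt_eq_orderEmbOfFin hi ▸ orderEmbOfFin_mem _ _ _

theorem nthElt_le_nthElt (hij : i ≤ j) (hj : j < #s) : nthElt s i ≤ nthElt s j := by
  rw [nthElt_eq_orderEmbOfFin (hij.trans_lt hj), nthElt_eq_orderEmbOfFin hj]
  exact (s.orderEmbOfFin rfl).monotone hij

theorem card_holes (hs : s ⊆ range n) : #(holes n s) = n + 1 - #s := by
  rw [holes, card_sdiff_of_subset (hs.trans (range_subset_range.2 n.le_succ)), card_range]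

theorem hnth_le (hs : s ⊆ range n) (hi : i < n + 1 - #s) : hnth n s i ≤ n :=
  Nat.lt_succ_iff.1 <| mem_range.1 (mem_sdiff.1 (nthElt_mem (card_holes hs ▸ hi))).1

theorem hnth_le_hnth (hs : s ⊆ range n) (hij : i ≤ j) (hj : j < n + 1 - #s) :
    hnth n s i ≤ hnth n s j :=
  nthElt_le_nthElt hij (card_holes hs ▸ hj)

end IState

-- Positions are 0-indexed: `t : Fin n` stands for `U_{t+1}`, so `genInterval n x y i` is the
-- paper's `G_{i+1}` shifted down by one.
def genInterval (n : ℕ) (x y : Finset ℕ) (i : ℕ) : Finset (Fin n) :=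
  {t : Fin n | max (hnth n x i) (hnth n y i) ≤ t ∧ t < min (hnth n x (i + 1)) (hnth n y (i + 1))}

section GenInterval

variable {n i j : ℕ} {x y : Finset ℕ}

theorem card_genInterval (hx : x ⊆ range n) (hi : i < n - #x) :
    #(genInterval n x y i) =
      min (hnth n x (i + 1)) (hnth n y (i + 1)) - max (hnth n x i) (hnth n y i) := by
  have hle : min (hnth n x (i + 1)) (hnth n y (i + 1)) ≤ n :=
    (min_le_left _ _).trans (hnth_le hx (by omega))
  rw [← card_map Fin.valEmbedding, ← Nat.card_Ico]
  congr 1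
  ext m
  simp only [genInterval, mem_map, mem_filter, mem_univ, true_and, Fin.valEmbedding_apply, mem_Ico]
  exact ⟨fun ⟨t, ht, htm⟩ => htm ▸ ht, fun hm => ⟨⟨m, by omega⟩, hm, rfl⟩⟩

theorem disjoint_genInterval (hx : x ⊆ range n) (hij : i < j) (hj : j < n - #x) :
    Disjoint (genInterval n x y i) (genInterval n x y j) := by
  have := hnth_le_hnth hx (show i + 1 ≤ j by omega) (by omega)
  refine disjoint_left.2 fun t hti htj => ?_
  simp only [genInterval, mem_filter, mem_univ, true_and] at hti htj
  omega

theorem pairwiseDisjoint_genInterval (hx : x ⊆ range n) :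
    (range (n - #x) : Set ℕ).PairwiseDisjoint (genInterval n x y) := by
  intro i hi j hj hij
  rcases hij.lt_or_gt with h | h
  · exact disjoint_genInterval hx h (mem_range.1 hj)
  · exact (disjoint_genInterval hx h (mem_range.1 hi)).symm

end GenInterval

theorem graded_dimension_OSz_general (n k : ℕ) (hkn : k ≤ n) (x y : Finset ℕ)
    (hx : x ⊆ Finset.range n) (hxk : x.card = k) :
    PowerSeries.mk (fun m => (Ncount n k x y m : ℤ))
      = (∏ i ∈ Finset.range (n - k),
          ∑ j ∈ Finset.range
            (min (hnth n x (i + 1)) (hnth n y (i + 1)) - max (hnth n x i) (hnth n y i)),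
            (PowerSeries.X : PowerSeries ℤ) ^ j) *
        Ring.inverse (1 - (PowerSeries.X : PowerSeries ℤ)) ^ k := by
  subst hxk
  have hN : mk (fun m => (Ncount n #x x y m : ℤ)) = tupleGF ℤ n
      (fun a => ∀ i ∈ range (n - #x), ∃ t ∈ genInterval n x y i, a t = 0) := by
    simp only [Ncount, tupleGF, genInterval, mem_range, mem_filter, mem_univ, true_and,
      and_assoc]
  rw [hN, tupleGF_forall_exists_eq_zero _ _ (pairwiseDisjoint_genInterval hx),
    inverse_one_sub_X]
  calc _ = (∏ i ∈ range (n - #x), ∑ j ∈ range (min (hnth n x (i + 1)) (hnth n y (i + 1)) -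
          max (hnth n x i) (hnth n y i)), (X : ℤ⟦X⟧) ^ j) *
        ((1 - X) * mk 1) ^ (n - #x) * mk 1 ^ #x := by
        rw [prod_congr rfl fun i hi => by
          rw [card_genInterval hx (mem_range.1 hi), ← geom_sum_mul_neg], prod_mul_distrib,
          prod_const, card_range, mul_pow, ← Nat.sub_add_cancel hkn, pow_add, Nat.add_sub_cancel]
        ring
    _ = _ := by rw [mul_comm (1 - X), mk_one_mul_one_sub_eq_one, one_pow, mul_one]

/-- `Σ_{m≥0} N_m t^m = Π_{i=1}^{n−k} (1 + t + ⋯ + t^{l_i−1}) · (1 − t)^{−k}` in `ℤ[[t]]`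
(the inverse of the unit `1 − t` is expressed via `Ring.inverse`). -/
theorem graded_dimension_OSz (n k : ℕ) (hkn : k ≤ n) (x y : Finset ℕ)
    (hx : x ⊆ Finset.range n) (hy : y ⊆ Finset.range n)
    (hxk : x.card = k) (hyk : y.card = k) (hfar : ¬ TooFar k x y) :
    PowerSeries.mk (fun m => (Ncount n k x y m : ℤ))
      = (∏ i ∈ Finset.range (n - k),
          ∑ j ∈ Finset.range
            (min (hnth n x (i + 1)) (hnth n y (i + 1)) - max (hnth n x i) (hnth n y i)),
            (PowerSeries.X : PowerSeries ℤ) ^ j) *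
        Ring.inverse (1 - (PowerSeries.X : PowerSeries ℤ)) ^ k :=
  graded_dimension_OSz_general n k hkn x y hx hxk
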